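/- Let X be a 5-large flag simplicial complex satisfying the extended-5-wheel condition. If W = W_1 ∪ W_2 is a planar (5,6)-dwheel in X with both wheels full subcomplexes, then W is contained in the 1-ball centered at some vertex of X. -/

import Mathlib

/-- A flag simplicial complex is determined by its 1-skeleton graph `G`.
A `k`-wheel `(c; r 0, …, r (k-1))`: `r` is an (injective) cycle and `c` is adjacent
to every rim vertex. -/
def IsWheel {V : Type*} (G : SimpleGraph V) {k : ℕ} (c : V) (r : ZMod k → V) : Prop :=
  Function.Injective r ∧ (∀ i, c ≠ r i) ∧ (∀ i, G.Adj (r i) (r (i + 1))) ∧ (∀ i, G.Adj c (r i))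

/-- A wheel that is a full (induced) subcomplex: the only adjacencies among rim
vertices are the consecutive ones. -/
def IsFullWheel {V : Type*} (G : SimpleGraph V) {k : ℕ} (c : V) (r : ZMod k → V) : Prop :=
  IsWheel G c r ∧ ∀ i j, G.Adj (r i) (r j) → j = i + 1 ∨ i = j + 1

/-- `5`-largeness: no induced (full) `4`-cycle. -/
def FiveLarge {V : Type*} (G : SimpleGraph V) : Prop :=
  ∀ a b c d : V, a ≠ c → b ≠ d → G.Adj a b → G.Adj b c → G.Adj c d → G.Adj d a →
    G.Adj a c ∨ G.Adj b d

/-- Local `5`-largeness: no vertex link contains an induced `4`-cycle. -/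
def LocallyFiveLarge {V : Type*} (G : SimpleGraph V) : Prop :=
  ∀ z a b c d : V, G.Adj z a → G.Adj z b → G.Adj z c → G.Adj z d →
    a ≠ c → b ≠ d → G.Adj a b → G.Adj b c → G.Adj c d → G.Adj d a →
    G.Adj a c ∨ G.Adj b d

/-- The extended `5`-wheel condition: every extended `5`-wheel `(c; r; a)` is
contained in the link of some vertex `z`. -/
def ExtFiveWheelCond {V : Type*} (G : SimpleGraph V) : Prop :=
  ∀ (c a : V) (r : ZMod 5 → V), IsWheel G c r →
    G.Adj a (r 0) → G.Adj a (r 1) → a ≠ c → ¬ G.Adj a c →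
    (∀ i : ZMod 5, i ≠ 0 → i ≠ 1 → a ≠ r i ∧ ¬ G.Adj a (r i)) →
    ∃ z : V, G.Adj z c ∧ G.Adj z a ∧ ∀ i, G.Adj z (r i)

/-- `m`-location.  A `(k,l)`-dwheel is the union of wheels
`W₁ = (w l; v 0, …, v (k-1))` and `W₂ = (v 1; w 0, …, w (l-1))` with
`v 2 = w (l-2)` (shared rim vertex) and either `v 0 = w 0` (planar, boundary
length `k+l-4`) or `v 0 ~ w 0` (nonplanar, boundary length `k+l-3`).
Here the center of `W₁` is `w (-1)` and the center of `W₂` is `v 1`.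
If both wheels are full and the boundary length is at most `m`, the dwheel is
contained in the link of some vertex. -/
def MLocated {V : Type*} (G : SimpleGraph V) (m : ℕ) : Prop :=
  ∀ (k l : ℕ), 4 ≤ k → 4 ≤ l → ∀ (v : ZMod k → V) (w : ZMod l → V),
    IsFullWheel G (w (-1)) v → IsFullWheel G (v 1) w → v 2 = w (-2) →
    ((v 0 = w 0 ∧ k + l - 4 ≤ m) ∨ (v 0 ≠ w 0 ∧ G.Adj (v 0) (w 0) ∧ k + l - 3 ≤ m)) →
    ∃ z : V, (∀ i, G.Adj z (v i)) ∧ (∀ i, G.Adj z (w i))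

/-!
Let `W₁ = (w 5; v)` and `W₂ = (v 1; w)`. The extended `5`-wheel `W₁ ∪ {w 1}` yields a vertex
`z₁` adjacent to `w 5`, `w 1` and the whole rim of `W₁`. If `z₁ = w 2` it is the centre of the
ball. Otherwise `(v 1; w 4, z₁, w 1, w 2, w 3)` is a `5`-wheel which, extended by `v 3`, yields a
vertex `z` adjacent to `v 1`, `v 3` and `w 1, …, w 4`; three applications of `5`-largeness then
make `z` adjacent to the remaining vertices `w 5`, `w 0 = v 0` and `v 4`.
-/

section

variable {V : Type*} {G : SimpleGraph V}

theorem forall_zmod_five {P : ZMod 5 → Prop} : (∀ i, P i) ↔ P 0 ∧ P 1 ∧ P 2 ∧ P 3 ∧ P 4 :=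
  ⟨fun h => ⟨h 0, h 1, h 2, h 3, h 4⟩, fun ⟨_, _, _, _, _⟩ i => by fin_cases i <;> assumption⟩

theorem forall_zmod_six {P : ZMod 6 → Prop} :
    (∀ i, P i) ↔ P 0 ∧ P 1 ∧ P 2 ∧ P 3 ∧ P 4 ∧ P 5 :=
  ⟨fun h => ⟨h 0, h 1, h 2, h 3, h 4, h 5⟩,
    fun ⟨_, _, _, _, _, _⟩ i => by fin_cases i <;> assumption⟩

theorem IsFullWheel.not_adj {k : ℕ} {c : V} {r : ZMod k → V} (hW : IsFullWheel G c r)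
    {i j : ZMod k} (hij : j ≠ i + 1) (hji : i ≠ j + 1) : ¬G.Adj (r i) (r j) :=
  fun h => (hW.2 i j h).elim hij hji

theorem isWheel_five {c a₀ a₁ a₂ a₃ a₄ : V}
    (h₀₁ : G.Adj a₀ a₁) (h₁₂ : G.Adj a₁ a₂) (h₂₃ : G.Adj a₂ a₃) (h₃₄ : G.Adj a₃ a₄)
    (h₄₀ : G.Adj a₄ a₀) (hc₀ : G.Adj c a₀) (hc₁ : G.Adj c a₁) (hc₂ : G.Adj c a₂)
    (hc₃ : G.Adj c a₃) (hc₄ : G.Adj c a₄) (h₀₂ : a₀ ≠ a₂) (h₀₃ : a₀ ≠ a₃) (h₁₃ : a₁ ≠ a₃)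
    (h₁₄ : a₁ ≠ a₄) (h₂₄ : a₂ ≠ a₄) :
    IsWheel (k := 5) G c ![a₀, a₁, a₂, a₃, a₄] := by
  refine ⟨?_, fun i => ?_, forall_zmod_five.2 ⟨h₀₁, h₁₂, h₂₃, h₃₄, h₄₀⟩,
    forall_zmod_five.2 ⟨hc₀, hc₁, hc₂, hc₃, hc₄⟩⟩
  · show Function.Injective (![a₀, a₁, a₂, a₃, a₄] : Fin 5 → V)
    simp only [Matrix.vecCons, Fin.cons_injective_iff]
    simp [Matrix.range_cons, h₀₁.ne, h₀₂, h₀₃, h₄₀.ne', h₁₂.ne, h₁₃, h₁₄, h₂₃.ne, h₂₄, h₃₄.ne,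
      Function.injective_of_subsingleton]
  · fin_cases i
    exacts [hc₀.ne, hc₁.ne, hc₂.ne, hc₃.ne, hc₄.ne]

namespace FiveLarge

variable (h5 : FiveLarge G)
include h5

theorem adj_of_square {a b c d : V} (hac : a ≠ c) (hbd : b ≠ d) (hab : G.Adj a b)
    (hbc : G.Adj b c) (hcd : G.Adj c d) (hda : G.Adj d a) (hnbd : ¬G.Adj b d) : G.Adj a c :=
  (h5 a b c d hac hbd hab hbc hcd hda).resolve_right hnbd

theorem ne_and_not_adj {c₁ c₂ x y : V} (hc : G.Adj c₁ c₂) (hx : G.Adj c₁ x) (hy : G.Adj c₂ y)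
    (hxc : x ≠ c₂) (hyc : y ≠ c₁) (hx₂ : ¬G.Adj c₂ x) (hy₁ : ¬G.Adj c₁ y) :
    x ≠ y ∧ ¬G.Adj x y := by
  refine ⟨by rintro rfl; exact hy₁ hx, fun hxy => ?_⟩
  exact hx₂ (adj_of_square h5 hxc hyc hxy hy.symm hc.symm hx fun h => hy₁ h.symm).symm

end FiveLarge

/-- A planar `(5,6)`-dwheel with full wheels `(w 5; v)` and `(v 1; w)`; the paper's `v₁, …, v₅`
and `w₁, …, w₆` are `v 0, …, v 4` and `w 0, …, w 5`. -/
structure IsPlanarFiveSixDwheel (G : SimpleGraph V) (v : ZMod 5 → V) (w : ZMod 6 → V) : Prop where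
  full₁ : IsFullWheel G (w 5) v
  full₂ : IsFullWheel G (v 1) w
  shared : v 2 = w 4
  planar : v 0 = w 0

namespace IsPlanarFiveSixDwheel

variable {v : ZMod 5 → V} {w : ZMod 6 → V} (hD : IsPlanarFiveSixDwheel G v w) (h5 : FiveLarge G)
include hD h5

theorem v_ne_and_not_adj_w {i : ZMod 5} {j : ZMod 6} (hi : i = 3 ∨ i = 4)
    (hj : j = 1 ∨ j = 2 ∨ j = 3) : v i ≠ w j ∧ ¬G.Adj (v i) (w j) := by
  obtain ⟨⟨hv_inj, -, -, hc_adj⟩, -⟩ := hD.full₁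
  obtain ⟨⟨hw_inj, -, -, hv₁_adj⟩, -⟩ := hD.full₂
  obtain ⟨hvi, hvi_adj⟩ : v i ≠ v 1 ∧ ¬G.Adj (v 1) (v i) := by
    rcases hi with rfl | rfl <;>
      exact ⟨hv_inj.ne (by decide), hD.full₁.not_adj (by decide) (by decide)⟩
  obtain ⟨hwj, hwj_adj⟩ : w j ≠ w 5 ∧ ¬G.Adj (w 5) (w j) := by
    rcases hj with rfl | rfl | rfl <;>
      exact ⟨hw_inj.ne (by decide), hD.full₂.not_adj (by decide) (by decide)⟩
  exact h5.ne_and_not_adj (hc_adj 1) (hc_adj i) (hv₁_adj j) hvi hwj hvi_adj hwj_adj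

theorem exists_adj_w₅_w₁_v (hext : ExtFiveWheelCond G) :
    ∃ z, G.Adj z (w 5) ∧ G.Adj z (w 1) ∧ ∀ i, G.Adj z (v i) := by
  obtain ⟨⟨hw_inj, -, hw_adj, hv₁_adj⟩, -⟩ := hD.full₂
  have apex (i : ZMod 5) (hi : i = 3 ∨ i = 4) : w 1 ≠ v i ∧ ¬G.Adj (w 1) (v i) := by
    obtain ⟨hne, hadj⟩ := hD.v_ne_and_not_adj_w h5 hi (.inl rfl)
    exact ⟨hne.symm, fun h => hadj h.symm⟩
  refine hext (w 5) (w 1) v hD.full₁.1 (hD.planar ▸ (hw_adj 0).symm) (hv₁_adj 1).symm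
    (hw_inj.ne (by decide)) (hD.full₂.not_adj (by decide) (by decide))
    (forall_zmod_five.2 ⟨fun h => absurd rfl h, fun _ h => absurd rfl h, fun _ _ => ?_,
      fun _ _ => apex 3 (.inl rfl), fun _ _ => apex 4 (.inr rfl)⟩)
  rw [hD.shared]
  exact ⟨hw_inj.ne (by decide), hD.full₂.not_adj (by decide) (by decide)⟩

theorem exists_adj_v₁_v₃_w₁_w₂_w₃_w₄ (hext : ExtFiveWheelCond G) {z₁ : V}
    (hz₁w₁ : G.Adj z₁ (w 1)) (hz₁v : ∀ i, G.Adj z₁ (v i)) (hz₁w₂ : z₁ ≠ w 2) :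
    ∃ z, G.Adj z (v 1) ∧ G.Adj z (v 3) ∧
      G.Adj z (w 1) ∧ G.Adj z (w 2) ∧ G.Adj z (w 3) ∧ G.Adj z (w 4) := by
  obtain ⟨⟨hv_inj, -, hv_adj, -⟩, -⟩ := hD.full₁
  obtain ⟨⟨hw_inj, -, hw_adj, hv₁_adj⟩, -⟩ := hD.full₂
  have hz₁w₄ : G.Adj z₁ (w 4) := hD.shared ▸ hz₁v 2
  have hz₁w₃ : z₁ ≠ w 3 := by
    rintro rfl
    exact hD.full₂.not_adj (i := 3) (j := 1) (by decide) (by decide) hz₁w₁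
  have hwheel := isWheel_five (c := v 1) hz₁w₄.symm hz₁w₁ (hw_adj 1) (hw_adj 2) (hw_adj 3)
    (hv₁_adj 4) (hz₁v 1).symm (hv₁_adj 1) (hv₁_adj 2) (hv₁_adj 3)
    (hw_inj.ne (by decide)) (hw_inj.ne (by decide)) hz₁w₂ hz₁w₃ (hw_inj.ne (by decide))
  obtain ⟨z, hzv₁, hzv₃, hzr⟩ := hext (v 1) (v 3) _ hwheel (hD.shared ▸ (hv_adj 2).symm)
    (hz₁v 3).symm (hv_inj.ne (by decide)) (hD.full₁.not_adj (by decide) (by decide))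
    (forall_zmod_five.2 ⟨fun h => absurd rfl h, fun _ h => absurd rfl h,
      fun _ _ => hD.v_ne_and_not_adj_w h5 (.inl rfl) (.inl rfl),
      fun _ _ => hD.v_ne_and_not_adj_w h5 (.inl rfl) (.inr (.inl rfl)),
      fun _ _ => hD.v_ne_and_not_adj_w h5 (.inl rfl) (.inr (.inr rfl))⟩)
  exact ⟨z, hzv₁, hzv₃, hzr 2, hzr 3, hzr 4, hzr 0⟩

theorem forall_adj_of_adj_v₁_v₃_w₁_w₂_w₃_w₄ {z : V}
    (hz : G.Adj z (v 1) ∧ G.Adj z (v 3) ∧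
      G.Adj z (w 1) ∧ G.Adj z (w 2) ∧ G.Adj z (w 3) ∧ G.Adj z (w 4)) :
    (∀ i, G.Adj z (v i)) ∧ ∀ j, G.Adj z (w j) := by
  obtain ⟨hzv₁, hzv₃, hzw₁, hzw₂, hzw₃, hzw₄⟩ := hz
  obtain ⟨⟨hv_inj, -, hv_adj, hc_adj⟩, -⟩ := hD.full₁
  obtain ⟨⟨hw_inj, -, hw_adj, -⟩, -⟩ := hD.full₂
  have hv₀v₃ : ¬G.Adj (v 0) (v 3) := hD.full₁.not_adj (by decide) (by decide)
  have hw₁w₅ : ¬G.Adj (w 1) (w 5) := hD.full₂.not_adj (by decide) (by decide)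
  have hzw₅ : G.Adj z (w 5) := by
    refine h5.adj_of_square ?_ (hv_inj.ne (by decide)) hzv₃ (hc_adj 3).symm (hc_adj 1)
      hzv₁.symm (hD.full₁.not_adj (by decide) (by decide))
    rintro rfl
    exact hw₁w₅ hzw₁.symm
  have hzw₀ : G.Adj z (w 0) := by
    refine h5.adj_of_square ?_ (hw_inj.ne (by decide)) hzw₁ (hw_adj 0).symm (hw_adj 5).symm
      hzw₅.symm hw₁w₅
    rintro rfl
    exact hv₀v₃ (hD.planar ▸ hzv₃)
  have hzv₄ : G.Adj z (v 4) := by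
    refine h5.adj_of_square ?_ (hv_inj.ne (by decide)) (hD.planar ▸ hzw₀) (hv_adj 4).symm
      (hv_adj 3).symm hzv₃.symm hv₀v₃
    rintro rfl
    exact (hD.v_ne_and_not_adj_w h5 (.inr rfl) (.inl rfl)).2 hzw₁
  exact ⟨forall_zmod_five.2 ⟨hD.planar ▸ hzw₀, hzv₁, hD.shared ▸ hzw₄, hzv₃, hzv₄⟩,
    forall_zmod_six.2 ⟨hzw₀, hzw₁, hzw₂, hzw₃, hzw₄, hzw₅⟩⟩

end IsPlanarFiveSixDwheel

end

/-- In a 5-large flag complex satisfying the extended-5-wheel condition,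
every planar (5,6)-dwheel with full wheels lies in a 1-ball. -/
theorem planar_five_six_dwheel_in_ball {V : Type*} (G : SimpleGraph V)
    (h5 : FiveLarge G) (hext : ExtFiveWheelCond G)
    (v : ZMod 5 → V) (w : ZMod 6 → V)
    (hW1 : IsFullWheel G (w (-1)) v) (hW2 : IsFullWheel G (v 1) w)
    (hshare : v 2 = w (-2)) (hplanar : v 0 = w 0) :
    ∃ z : V, (∀ i, z = v i ∨ G.Adj z (v i)) ∧ (∀ i, z = w i ∨ G.Adj z (w i)) := by
  -- `-1 = 5` and `-2 = 4` hold definitionally in `ZMod 6 = Fin 6`.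
  have hD : IsPlanarFiveSixDwheel G v w := ⟨hW1, hW2, hshare, hplanar⟩
  obtain ⟨z₁, hz₁w₅, hz₁w₁, hz₁v⟩ := hD.exists_adj_w₅_w₁_v h5 hext
  rcases eq_or_ne z₁ (w 2) with rfl | hz₁w₂
  · exact ⟨w 2, fun i => .inr (hz₁v i), forall_zmod_six.2 ⟨.inr (hplanar ▸ hz₁v 0), .inr hz₁w₁,
      .inl rfl, .inr (hW2.1.2.2.1 2), .inr (hD.shared ▸ hz₁v 2), .inr hz₁w₅⟩⟩
  · obtain ⟨z, hz⟩ := hD.exists_adj_v₁_v₃_w₁_w₂_w₃_w₄ h5 hext hz₁w₁ hz₁v hz₁w₂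
    obtain ⟨hzv, hzw⟩ := hD.forall_adj_of_adj_v₁_v₃_w₁_w₂_w₃_w₄ h5 hz
    exact ⟨z, fun i => .inr (hzv i), fun j => .inr (hzw j)⟩
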